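/- arXiv:2210.03959 — 3 statements merged into one kernel-verified Lean document; each statement's English description precedes it below -/
import Mathlib

section
/- Let G be a 3-connected graph and D a connected subgraph of G such that G−V(D) contains an even cycle. If C is an even cycle in G−V(D) chosen so that the component of G−V(C) containing D has maximum number of vertices, then G−V(C) is connected. -/
/-!
Suppose `G - V(C)` had a component `B` besides the component `A` containing `D`. By
3-connectivity both `A` and `B` attach to `C` in at least three vertices. A tripod inside `B`
joins three attachments `x₁, x₂, x₃` of `B` by three `B`-paths of even total length, and `C`
is cut by the `xᵢ` into three arcs of even total length, so some `B`-path between `xᵢ` and `xⱼ`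
has the parity of the arc between them, hence (as `|C|` is even) of both arcs. Closing it up
with the arc that misses an attachment `m ∉ {xᵢ, xⱼ}` of `A` gives an even cycle in `C ∪ B`
whose complement contains `A ∪ {m}` in one component, contradicting the maximality of `C`.
-/

open SimpleGraph

/-- `G` contains two cycles of consecutive even lengths `2m` and `2m+2`. -/
def HasTwoConsecEvenCycles {V : Type*} (G : SimpleGraph V) : Prop :=
  ∃ (u v : V) (c₁ : G.Walk u u) (c₂ : G.Walk v v) (m : ℕ),
    c₁.IsCycle ∧ c₂.IsCycle ∧ 0 < m ∧ c₁.length = 2 * m ∧ c₂.length = 2 * m + 2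

/-- `G` is `k`-connected: more than `k` vertices, and deleting any set of
fewer than `k` vertices leaves a connected graph. -/
def KConnected {V : Type*} (k : ℕ) (G : SimpleGraph V) : Prop :=
  k + 1 ≤ Nat.card V ∧ ∀ S : Set V, S.ncard < k → (G.induce Sᶜ).Connected

/-- The vertex set of the component of `G - S` containing the vertex `d`
(assuming `d ∉ S`): all vertices reachable from `d` by a walk avoiding `S`. -/
def avoidComp {V : Type*} (G : SimpleGraph V) (d : V) (S : Set V) : Set V :=
  {v : V | ∃ p : G.Walk d v, ∀ w ∈ p.support, w ∉ S}

open Walk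

section

variable {V : Type*}

def attachments (G : SimpleGraph V) (A S : Set V) : Set V :=
  {x | x ∈ S ∧ ∃ a ∈ A, G.Adj a x}

variable {G : SimpleGraph V}

lemma SimpleGraph.Reachable.exists_walk_of_induce {s : Set V} {a b : s}
    (h : (G.induce s).Reachable a b) : ∃ p : G.Walk a b, ∀ x ∈ p.support, x ∈ s := by
  obtain ⟨w⟩ := h
  refine ⟨w.map (Embedding.induce s).toHom, fun x hx => ?_⟩
  change x ∈ (w.map (Embedding.induce s).toHom).support at hx
  rw [Walk.support_map] at hx
  obtain ⟨y, -, rfl⟩ := List.mem_map.1 hx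
  exact y.2

section AvoidComp

variable {S : Set V} {d v w : V}

lemma notMem_of_mem_avoidComp (h : v ∈ avoidComp G d S) : v ∉ S :=
  let ⟨p, hp⟩ := h
  hp v p.end_mem_support

lemma mem_avoidComp_self (hd : d ∉ S) : d ∈ avoidComp G d S :=
  ⟨nil, by simpa using hd⟩

lemma mem_avoidComp_of_mem_support {p : G.Walk v w} (hp : ∀ x ∈ p.support, x ∉ S) {x : V}
    (hx : x ∈ p.support) : x ∈ avoidComp G v S := by
  classical
  exact ⟨p.takeUntil x hx, fun y hy => hp y (p.support_takeUntil_subset_support hx hy)⟩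

lemma mem_avoidComp_trans (hv : v ∈ avoidComp G d S) (hw : w ∈ avoidComp G v S) :
    w ∈ avoidComp G d S := by
  obtain ⟨p, hp⟩ := hv
  obtain ⟨q, hq⟩ := hw
  exact ⟨p.append q, fun x hx => ((mem_support_append_iff p q).1 hx).elim (hp x) (hq x)⟩

lemma mem_avoidComp_comm (hv : v ∈ avoidComp G d S) : d ∈ avoidComp G v S := by
  obtain ⟨p, hp⟩ := hv
  exact ⟨p.reverse, fun x hx => hp x (by simpa using hx)⟩

lemma mem_avoidComp_of_adj (hv : v ∈ avoidComp G d S) (hadj : G.Adj v w) (hw : w ∉ S) :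
    w ∈ avoidComp G d S :=
  mem_avoidComp_trans hv ⟨hadj.toWalk, by simp [notMem_of_mem_avoidComp hv, hw]⟩

lemma exists_walk_of_mem_avoidComp (hv : v ∈ avoidComp G d S) (hw : w ∈ avoidComp G d S) :
    ∃ p : G.Walk v w, ∀ x ∈ p.support, x ∈ avoidComp G d S := by
  obtain ⟨p, hp⟩ := mem_avoidComp_trans (mem_avoidComp_comm hv) hw
  exact ⟨p, fun x hx => mem_avoidComp_trans hv (mem_avoidComp_of_mem_support hp hx)⟩

lemma disjoint_avoidComp (hw : w ∉ avoidComp G d S) :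
    Disjoint (avoidComp G d S) (avoidComp G w S) :=
  Set.disjoint_left.2 fun _ hd hw' => hw (mem_avoidComp_trans hd (mem_avoidComp_comm hw'))

lemma induce_avoidComp_preconnected : (G.induce (avoidComp G d S)).Preconnected := by
  rintro ⟨v, hv⟩ ⟨w, hw⟩
  obtain ⟨p, hp⟩ := exists_walk_of_mem_avoidComp hv hw
  exact ⟨p.induce _ hp⟩

lemma induce_compl_connected_of_forall_mem_avoidComp (hd : d ∉ S)
    (h : ∀ v ∉ S, v ∈ avoidComp G d S) : (G.induce Sᶜ).Connected := by
  rw [connected_iff_exists_forall_reachable]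
  refine ⟨⟨d, hd⟩, fun ⟨v, hv⟩ => ?_⟩
  obtain ⟨p, hp⟩ := h v hv
  exact ⟨p.induce Sᶜ hp⟩

lemma subset_avoidComp_of_preconnected {D : Set V} (hD : (G.induce D).Preconnected)
    (hd : d ∈ D) (hDS : Disjoint D S) : D ⊆ avoidComp G d S := by
  intro v hv
  obtain ⟨p, hp⟩ := (hD ⟨d, hd⟩ ⟨v, hv⟩).exists_walk_of_induce
  exact ⟨p, fun x hx => Set.disjoint_left.1 hDS (hp x hx)⟩

lemma mem_avoidComp_of_walk_of_notMem_attachments {p : G.Walk v w}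
    (hv : v ∈ avoidComp G d S) (hp : ∀ x ∈ p.support, x ∉ attachments G (avoidComp G d S) S) :
    w ∈ avoidComp G d S := by
  induction p with
  | nil => exact hv
  | cons hadj q ih =>
    refine ih (mem_avoidComp_of_adj hv hadj fun hS => hp _ ?_ ⟨hS, _, hv, hadj⟩)
      fun x hx => hp x (by simp [hx])
    simp

-- The attachments of the component of `d` in `G - S` separate it from `w`.
lemma le_ncard_attachments {k : ℕ} (hG : KConnected k G) (hd : d ∉ S) (hw : w ∉ S)
    (hwd : w ∉ avoidComp G d S) : k ≤ (attachments G (avoidComp G d S) S).ncard := by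
  by_contra! hlt
  have hdT : d ∉ attachments G (avoidComp G d S) S := fun h => hd h.1
  have hwT : w ∉ attachments G (avoidComp G d S) S := fun h => hw h.1
  obtain ⟨p, hp⟩ := ((hG.2 _ hlt).preconnected ⟨d, hdT⟩ ⟨w, hwT⟩).exists_walk_of_induce
  exact hwd (mem_avoidComp_of_walk_of_notMem_attachments (mem_avoidComp_self hd) hp)

lemma avoidComp_ssubset {S' : Set V} {m : V} (hS' : Disjoint S' (avoidComp G d S))
    (hm : m ∈ attachments G (avoidComp G d S) S) (hmS' : m ∉ S') :
    avoidComp G d S ⊂ avoidComp G d S' := by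
  have hsub : avoidComp G d S ⊆ avoidComp G d S' := by
    intro v hv
    obtain ⟨p, hp⟩ :=
      exists_walk_of_mem_avoidComp (mem_avoidComp_trans hv (mem_avoidComp_comm hv)) hv
    exact ⟨p, fun x hx hxS' => Set.disjoint_left.1 hS' hxS' (hp x hx)⟩
  obtain ⟨hmS, a, ha, hadj⟩ := hm
  exact ⟨hsub, fun h => notMem_of_mem_avoidComp (h (mem_avoidComp_of_adj (hsub ha) hadj hmS')) hmS⟩

end AvoidComp

section Walks

variable {u v w x y z : V}

lemma SimpleGraph.Walk.IsPath.start_notMem_support_tail {p : G.Walk u v} (hp : p.IsPath) :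
    u ∉ p.support.tail :=
  (List.nodup_cons.1 (p.cons_tail_support ▸ hp.support_nodup)).1

lemma SimpleGraph.Walk.IsPath.append_of_inter {p : G.Walk u v} {q : G.Walk v w}
    (hp : p.IsPath) (hq : q.IsPath) (h : ∀ x ∈ p.support, x ∈ q.support → x = v) :
    (p.append q).IsPath := by
  rw [isPath_def, support_append]
  refine hp.support_nodup.append hq.support_nodup.tail fun x hxp hxq => ?_
  obtain rfl := h x hxp ((mem_support_iff q).2 (Or.inr hxq))
  exact hq.start_notMem_support_tail hxq

lemma SimpleGraph.Walk.IsPath.isCycle_append_of_inter {p : G.Walk y z} {q : G.Walk z y}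
    (hp : p.IsPath) (hq : q.IsPath) (hlen : 2 ≤ p.length)
    (h : ∀ x ∈ p.support, x ∈ q.support → x = y ∨ x = z) : (p.append q).IsCycle := by
  refine hp.isCycle_append hq (fun x hxp hxq => ?_) (Or.inl hlen)
  rcases h x ((mem_support_iff p).2 (Or.inr hxp)) ((mem_support_iff q).2 (Or.inr hxq)) with
    rfl | rfl
  · exact hp.start_notMem_support_tail hxp
  · exact hq.start_notMem_support_tail hxq

lemma SimpleGraph.Walk.IsCycle.eq_or_eq_of_mem_support_append {p : G.Walk y z}
    {q : G.Walk z y} (h : (p.append q).IsCycle) (hp : x ∈ p.support) (hq : x ∈ q.support) :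
    x = y ∨ x = z := by
  have hnd := h.support_nodup
  rw [tail_support_append] at hnd
  by_contra! hx
  exact List.disjoint_of_nodup_append hnd (((mem_support_iff p).1 hp).resolve_left hx.1)
    (((mem_support_iff q).1 hq).resolve_left hx.2)

lemma SimpleGraph.Walk.IsCycle.append_comm {p : G.Walk y z} {q : G.Walk z y}
    (h : (p.append q).IsCycle) : (q.append p).IsCycle := by
  have hlen := h.three_le_length
  rw [isCycle_def, isTrail_def, edges_append, tail_support_append] at h ⊢
  obtain ⟨ht, -, hnd⟩ := h
  refine ⟨List.perm_append_comm.nodup_iff.1 ht, fun hnil => ?_,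
    List.perm_append_comm.nodup_iff.1 hnd⟩
  have := congrArg length hnil
  rw [length_append] at this hlen
  simp only [length_nil] at this
  omega

lemma SimpleGraph.Walk.exists_eq_append_append (c : G.Walk u v) (hy : y ∈ c.support)
    (hz : z ∈ c.support) :
    ∃ (a b : V) (W₁ : G.Walk u a) (W₂ : G.Walk a b) (W₃ : G.Walk b v),
      (a = y ∧ b = z ∨ a = z ∧ b = y) ∧ c = W₁.append (W₂.append W₃) := by
  obtain ⟨Q, R, rfl⟩ := mem_support_iff_exists_append.1 hy
  rcases (mem_support_append_iff Q R).1 hz with hzQ | hzR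
  · obtain ⟨Q₁, Q₂, rfl⟩ := mem_support_iff_exists_append.1 hzQ
    exact ⟨z, y, Q₁, Q₂, R, Or.inr ⟨rfl, rfl⟩, (append_assoc _ _ _).symm⟩
  · obtain ⟨R₁, R₂, rfl⟩ := mem_support_iff_exists_append.1 hzR
    exact ⟨y, z, Q, R₁, R₂, Or.inl ⟨rfl, rfl⟩, rfl⟩

end Walks

lemma exists_mem_ne_ne_of_three_le_ncard {α : Type*} {M : Set α} (hM : 3 ≤ M.ncard) (y z : α) :
    ∃ m ∈ M, m ≠ y ∧ m ≠ z := by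
  by_contra! h
  have hsub : M ⊆ {y, z} := fun m hm => by
    by_cases hmy : m = y
    exacts [Or.inl hmy, Or.inr (h m hm hmy)]
  have := (Set.ncard_le_ncard hsub).trans (Set.ncard_insert_le y {z})
  simp only [Set.ncard_singleton] at this
  omega

section EvenCycles

variable {x y z : V}

def SimpleGraph.Walk.IsPathVia (B : Set V) (P : G.Walk y z) : Prop :=
  P.IsPath ∧ 2 ≤ P.length ∧ ∀ v ∈ P.support, v = y ∨ v = z ∨ v ∈ B

lemma SimpleGraph.Walk.IsPathVia.isCycle_append {B : Set V} {P : G.Walk y z} {K : G.Walk z y}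
    (hP : P.IsPathVia B) (hK : K.IsPath) (hKB : ∀ v ∈ K.support, v ∉ B) :
    (P.append K).IsCycle :=
  hP.1.isCycle_append_of_inter hK hP.2.1 fun v hvP hvK =>
    (hP.2.2 v hvP).imp_right (Or.resolve_right · (hKB v hvK))

lemma SimpleGraph.Walk.IsPathVia.ne {B : Set V} {P : G.Walk y z} (hP : P.IsPathVia B) :
    y ≠ z := by
  rintro rfl
  have := length_eq_zero_iff.2 (isPath_iff_nil.1 hP.1)
  have := hP.2.1
  omega

lemma SimpleGraph.Walk.IsPathVia.mem_support_append {B : Set V} {P : G.Walk y z}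
    {K : G.Walk z y} (hP : P.IsPathVia B) {v : V} (hv : v ∈ (P.append K).support) :
    v ∈ K.support ∨ v ∈ B := by
  rcases (mem_support_append_iff P K).1 hv with hvP | hvK
  · rcases hP.2.2 v hvP with rfl | rfl | hvB
    exacts [Or.inl K.end_mem_support, Or.inl K.start_mem_support, Or.inr hvB]
  · exact Or.inl hvK

lemma exists_even_cycle_avoiding_mem_of_isPathVia {B S M : Set V} {A₁ : G.Walk y z}
    {A₂ : G.Walk z y} {P : G.Walk y z} (hY : (A₁.append A₂).IsCycle)
    (hYe : Even (A₁.append A₂).length) (hYS : ∀ v, v ∈ (A₁.append A₂).support ↔ v ∈ S)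
    (hBS : Disjoint B S) (hP : P.IsPathVia B) (hPe : Even (P.length + A₁.length))
    (hM : 3 ≤ M.ncard) (hMS : M ⊆ S) :
    ∃ (w : V) (c : G.Walk w w), c.IsCycle ∧ Even c.length ∧ (∃ m ∈ M, m ∉ c.support) ∧
      ∀ v ∈ c.support, v ∈ S ∨ v ∈ B := by
  have hSB : ∀ v ∈ S, v ∉ B := fun v hvS hvB => Set.disjoint_left.1 hBS hvB hvS
  obtain ⟨m, hmM, hmy, hmz⟩ := exists_mem_ne_ne_of_three_le_ncard hM y z
  -- `P` closes up either arc of the cycle to an even cycle; use the arc avoiding `m`.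
  suffices ∃ K : G.Walk z y, K.IsPath ∧ (∀ v ∈ K.support, v ∈ S) ∧
      Even (P.length + K.length) ∧ m ∉ K.support by
    obtain ⟨K, hK, hKS, hKe, hmK⟩ := this
    refine ⟨y, P.append K, hP.isCycle_append hK fun v hv => hSB v (hKS v hv),
      by rwa [length_append], ⟨m, hmM, fun hm => ?_⟩,
      fun v hv => (hP.mem_support_append hv).imp_left (hKS v)⟩
    exact (hP.mem_support_append hm).elim hmK (hSB m (hMS hmM))
  have hyz := hP.ne
  by_cases hmA₂ : m ∈ A₂.support
  · have hmA₁ : m ∉ A₁.support := fun h =>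
      (hY.eq_or_eq_of_mem_support_append h hmA₂).elim hmy hmz
    refine ⟨A₁.reverse, (hY.isPath_of_append_left (not_nil_of_ne hyz.symm)).reverse,
      fun v hv => (hYS v).1 ?_, by rwa [length_reverse], by simpa using hmA₁⟩
    rw [support_reverse, List.mem_reverse] at hv
    exact (mem_support_append_iff _ _).2 (Or.inl hv)
  · refine ⟨A₂, hY.isPath_of_append_right (not_nil_of_ne hyz),
      fun v hv => (hYS v).1 ((mem_support_append_iff _ _).2 (Or.inr hv)), ?_, hmA₂⟩
    rw [length_append, Nat.even_add] at hYe
    rw [Nat.even_add] at hPe ⊢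
    tauto

lemma exists_even_cycle_avoiding_mem_of_triangle {B S M : Set V} {W₁ : G.Walk x y}
    {W₂ : G.Walk y z} {W₃ : G.Walk z x} {P₁ : G.Walk x y} {P₂ : G.Walk y z} {P₃ : G.Walk z x}
    (hY : (W₁.append (W₂.append W₃)).IsCycle) (hYe : Even (W₁.append (W₂.append W₃)).length)
    (hYS : ∀ v, v ∈ (W₁.append (W₂.append W₃)).support ↔ v ∈ S) (hBS : Disjoint B S)
    (hP₁ : P₁.IsPathVia B) (hP₂ : P₂.IsPathVia B) (hP₃ : P₃.IsPathVia B)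
    (hPe : Even (P₁.length + P₂.length + P₃.length)) (hM : 3 ≤ M.ncard) (hMS : M ⊆ S) :
    ∃ (w : V) (c : G.Walk w w), c.IsCycle ∧ Even c.length ∧ (∃ m ∈ M, m ∉ c.support) ∧
      ∀ v ∈ c.support, v ∈ S ∨ v ∈ B := by
  simp only [length_append, Nat.even_iff] at hYe hPe
  have hY₂ : (W₂.append (W₃.append W₁)).IsCycle := by
    rw [append_assoc]
    exact hY.append_comm
  have hY₃ : (W₃.append (W₁.append W₂)).IsCycle := by
    rw [append_assoc]
    exact hY₂.append_comm
  have hYS₂ : ∀ v, v ∈ (W₂.append (W₃.append W₁)).support ↔ v ∈ S := fun v => by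
    rw [← hYS]
    simp only [mem_support_append_iff]
    tauto
  have hYS₃ : ∀ v, v ∈ (W₃.append (W₁.append W₂)).support ↔ v ∈ S := fun v => by
    rw [← hYS]
    simp only [mem_support_append_iff]
    tauto
  have hpar : Even (P₁.length + W₁.length) ∨ Even (P₂.length + W₂.length) ∨
      Even (P₃.length + W₃.length) := by
    simp only [Nat.even_iff]
    omega
  rcases hpar with h | h | h
  · refine exists_even_cycle_avoiding_mem_of_isPathVia hY ?_ hYS hBS hP₁ h hM hMS
    simp only [length_append, Nat.even_iff]
    omega
  · refine exists_even_cycle_avoiding_mem_of_isPathVia hY₂ ?_ hYS₂ hBS hP₂ h hM hMS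
    simp only [length_append, Nat.even_iff]
    omega
  · refine exists_even_cycle_avoiding_mem_of_isPathVia hY₃ ?_ hYS₃ hBS hP₃ h hM hMS
    simp only [length_append, Nat.even_iff]
    omega

end EvenCycles

section Tripod

variable {B : Set V}

lemma exists_isPath_through (hB : (G.induce B).Preconnected) {x y b : V} (hx : x ∉ B)
    (hxy : x ≠ y) (hb : b ∈ B) (hxb : G.Adj x b) (hy : ∃ b' ∈ B, G.Adj b' y) :
    ∃ P : G.Walk x y, P.IsPath ∧ b ∈ P.support ∧ ∀ v ∈ P.support, v = x ∨ v = y ∨ v ∈ B := by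
  classical
  obtain ⟨b', hb', hb'y⟩ := hy
  obtain ⟨w, hw⟩ := (hB ⟨b, hb⟩ ⟨b', hb'⟩).exists_walk_of_induce
  have hT : ∀ v ∈ (w.concat hb'y).bypass.support, v = y ∨ v ∈ B := fun v hv => by
    have := support_bypass_subset_support _ hv
    rw [support_concat, List.mem_append, List.mem_singleton] at this
    exact this.symm.imp_right (hw v)
  refine ⟨cons hxb (w.concat hb'y).bypass, ?_, by simp, ?_⟩
  · refine (cons_isPath_iff _ _).2 ⟨bypass_isPath _, fun hx' => ?_⟩
    exact (hT x hx').elim hxy hx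
  · intro v hv
    rw [support_cons, List.mem_cons] at hv
    exact hv.imp_right (hT v)

lemma exists_isPath_to_support (hB : (G.induce B).Preconnected) {x b u v : V}
    {P : G.Walk u v} (hx : x ∉ P.support) (hb : b ∈ B) (hbP : b ∈ P.support)
    (hxB : ∃ b' ∈ B, G.Adj b' x) :
    ∃ h ∈ B, h ∈ P.support ∧ ∃ Q : G.Walk h x, Q.IsPath ∧ (∀ v ∈ Q.support, v = x ∨ v ∈ B) ∧
      ∀ v ∈ Q.support, v ∈ P.support → v = h := by
  classical
  obtain ⟨b', hb', hb'x⟩ := hxB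
  obtain ⟨w, hw⟩ := (hB ⟨b', hb'⟩ ⟨b, hb⟩).exists_walk_of_induce
  have hRB : ∀ v ∈ (cons hb'x.symm w).support, v = x ∨ v ∈ B := fun v hv => by
    rw [support_cons, List.mem_cons] at hv
    exact hv.imp_right (hw v)
  obtain ⟨h, hhP, hhR, hfirst⟩ := (cons hb'x.symm w).exists_mem_support_forall_mem_support_imp_eq
    P.support.toFinset ⟨b, by simp [hbP]⟩
  rw [List.mem_toFinset] at hhP
  have hh : h ∈ B := (hRB h hhR).resolve_left fun hhx => hx (hhx ▸ hhP)
  refine ⟨h, hh, hhP, ((cons hb'x.symm w).takeUntil h hhR).bypass.reverse,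
    (bypass_isPath _).reverse, fun v hv => ?_, fun v hv hvP => ?_⟩ <;>
    rw [support_reverse, List.mem_reverse] at hv
  · exact hRB v (support_takeUntil_subset_support _ _ (support_bypass_subset_support _ hv))
  · exact hfirst v (List.mem_toFinset.2 hvP) (support_bypass_subset_support _ hv)

lemma exists_tripod (hB : (G.induce B).Preconnected) {S : Set V} (hBS : Disjoint B S)
    {x₁ x₂ x₃ : V} (h₁ : x₁ ∈ attachments G B S) (h₂ : x₂ ∈ attachments G B S)
    (h₃ : x₃ ∈ attachments G B S) (h₁₂ : x₁ ≠ x₂) (h₁₃ : x₁ ≠ x₃) (h₂₃ : x₂ ≠ x₃) :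
    ∃ h ∈ B, ∃ (E₁ : G.Walk h x₁) (E₂ : G.Walk h x₂) (E₃ : G.Walk h x₃),
      (E₁.IsPath ∧ ∀ v ∈ E₁.support, v = x₁ ∨ v ∈ B) ∧
      (E₂.IsPath ∧ ∀ v ∈ E₂.support, v = x₂ ∨ v ∈ B) ∧
      (E₃.IsPath ∧ ∀ v ∈ E₃.support, v = x₃ ∨ v ∈ B) ∧
      (∀ v ∈ E₁.support, v ∈ E₂.support → v = h) ∧
      (∀ v ∈ E₂.support, v ∈ E₃.support → v = h) ∧
      (∀ v ∈ E₃.support, v ∈ E₁.support → v = h) := by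
  have hSB : ∀ {v}, v ∈ attachments G B S → v ∉ B := fun hv hvB =>
    Set.disjoint_left.1 hBS hvB hv.1
  obtain ⟨b₁, hb₁, hb₁x₁⟩ := h₁.2
  obtain ⟨P, hP, hb₁P, hPB⟩ := exists_isPath_through hB (hSB h₁) h₁₂ hb₁ hb₁x₁.symm h₂.2
  have hx₃P : x₃ ∉ P.support := fun hx₃ => by
    rcases hPB x₃ hx₃ with h' | h' | h'
    exacts [h₁₃ h'.symm, h₂₃ h'.symm, hSB h₃ h']
  -- the centre `h` is where a path from `x₃` through `B` first meets `P`
  obtain ⟨h, hh, hhP, E₃, hE₃, hE₃B, hE₃P⟩ := exists_isPath_to_support hB hx₃P hb₁ hb₁P h₃.2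
  obtain ⟨E₁, E₂, hE₁, hE₂, rfl⟩ := hP.mem_support_iff_exists_append.1 hhP
  have hE₁₂ : ∀ v ∈ E₁.support, v ∈ E₂.support → v = h := fun v hv₁ hv₂ => by
    by_contra hvh
    exact hP.ne_of_mem_support_of_append hvh hv₁ hv₂ rfl
  refine ⟨h, hh, E₁.reverse, E₂, E₃, ⟨hE₁.reverse, fun v hv => ?_⟩, ⟨hE₂, fun v hv => ?_⟩,
    ⟨hE₃, hE₃B⟩, fun v hv₁ hv₂ => hE₁₂ v (by simpa using hv₁) hv₂,
    fun v hv₂ hv₃ => hE₃P v hv₃ ((mem_support_append_iff _ _).2 (Or.inr hv₂)),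
    fun v hv₃ hv₁ => hE₃P v hv₃ ((mem_support_append_iff _ _).2 (Or.inl (by simpa using hv₁)))⟩
  · rw [support_reverse, List.mem_reverse] at hv
    rcases hPB v ((mem_support_append_iff _ _).2 (Or.inl hv)) with h' | rfl | h'
    exacts [Or.inl h', Or.inr (hE₁₂ _ hv E₂.end_mem_support ▸ hh), Or.inr h']
  · rcases hPB v ((mem_support_append_iff _ _).2 (Or.inr hv)) with rfl | h' | h'
    exacts [Or.inr (hE₁₂ _ E₁.start_mem_support hv ▸ hh), Or.inl h', Or.inr h']

lemma isPathVia_reverse_append {h x y : V} {E : G.Walk h x} {F : G.Walk h y} (hh : h ∈ B)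
    (hx : x ∉ B) (hy : y ∉ B) (hE : E.IsPath ∧ ∀ v ∈ E.support, v = x ∨ v ∈ B)
    (hF : F.IsPath ∧ ∀ v ∈ F.support, v = y ∨ v ∈ B)
    (hEF : ∀ v ∈ E.support, v ∈ F.support → v = h) : (E.reverse.append F).IsPathVia B := by
  have hlen : ∀ {t} (W : G.Walk h t), t ∉ B → 1 ≤ W.length := fun W ht => by
    by_contra! h0
    exact ht (W.eq_of_length_eq_zero (by omega) ▸ hh)
  refine ⟨hE.1.reverse.append_of_inter hF.1 fun v hvE hvF => hEF v (by simpa using hvE) hvF,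
    by simp only [length_append, length_reverse]; linarith [hlen E hx, hlen F hy], fun v hv => ?_⟩
  rcases (mem_support_append_iff _ _).1 hv with hvE | hvF
  · rw [support_reverse, List.mem_reverse] at hvE
    exact (hE.2 v hvE).imp_right Or.inr
  · exact (hF.2 v hvF).elim (fun h => Or.inr (Or.inl h)) (Or.inr ∘ Or.inr)

lemma exists_isPathVia_triangle (hB : (G.induce B).Preconnected) {S : Set V} (hBS : Disjoint B S)
    {x₁ x₂ x₃ : V} (h₁ : x₁ ∈ attachments G B S) (h₂ : x₂ ∈ attachments G B S)
    (h₃ : x₃ ∈ attachments G B S) (h₁₂ : x₁ ≠ x₂) (h₁₃ : x₁ ≠ x₃) (h₂₃ : x₂ ≠ x₃) :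
    ∃ (P₁ : G.Walk x₁ x₂) (P₂ : G.Walk x₂ x₃) (P₃ : G.Walk x₃ x₁),
      P₁.IsPathVia B ∧ P₂.IsPathVia B ∧ P₃.IsPathVia B ∧
      Even (P₁.length + P₂.length + P₃.length) := by
  have hSB : ∀ {v}, v ∈ attachments G B S → v ∉ B := fun hv hvB =>
    Set.disjoint_left.1 hBS hvB hv.1
  obtain ⟨h, hh, E₁, E₂, E₃, hE₁, hE₂, hE₃, hE₁₂, hE₂₃, hE₃₁⟩ :=
    exists_tripod hB hBS h₁ h₂ h₃ h₁₂ h₁₃ h₂₃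
  refine ⟨E₁.reverse.append E₂, E₂.reverse.append E₃, E₃.reverse.append E₁,
    isPathVia_reverse_append hh (hSB h₁) (hSB h₂) hE₁ hE₂ hE₁₂,
    isPathVia_reverse_append hh (hSB h₂) (hSB h₃) hE₂ hE₃ hE₂₃,
    isPathVia_reverse_append hh (hSB h₃) (hSB h₁) hE₃ hE₁ hE₃₁, ?_⟩
  -- each leg of the tripod is used twice
  simp only [length_append, length_reverse]
  exact ⟨E₁.length + E₂.length + E₃.length, by ring⟩

end Tripod

lemma exists_even_cycle_avoiding_mem_of_attachments {u : V} {c : G.Walk u u}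
    (hc : c.IsCycle) (hce : Even c.length) {B M : Set V} (hB : (G.induce B).Preconnected)
    (hBc : Disjoint B {v | v ∈ c.support})
    (hB3 : 3 ≤ (attachments G B {v | v ∈ c.support}).ncard) (hM : 3 ≤ M.ncard)
    (hMc : M ⊆ {v | v ∈ c.support}) :
    ∃ (w : V) (c' : G.Walk w w), c'.IsCycle ∧ Even c'.length ∧ (∃ m ∈ M, m ∉ c'.support) ∧
      ∀ v ∈ c'.support, v ∈ c.support ∨ v ∈ B := by
  classical
  obtain ⟨x₁, x₂, x₃, hx₁, hx₂, hx₃, h₁₂, h₁₃, h₂₃⟩ :=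
    (Set.two_lt_ncard_iff (Set.finite_of_ncard_pos (by omega))).1 hB3
  obtain ⟨y, z, W₁, W₂, W₃, hyz, hW⟩ := (c.rotate x₁ hx₁.1).exists_eq_append_append
    ((mem_support_rotate_iff ..).2 hx₂.1) ((mem_support_rotate_iff ..).2 hx₃.1)
  obtain ⟨P₁, P₂, P₃, hP₁, hP₂, hP₃, hPe⟩ : ∃ (P₁ : G.Walk x₁ y) (P₂ : G.Walk y z)
      (P₃ : G.Walk z x₁), P₁.IsPathVia B ∧ P₂.IsPathVia B ∧ P₃.IsPathVia B ∧
        Even (P₁.length + P₂.length + P₃.length) := by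
    rcases hyz with ⟨rfl, rfl⟩ | ⟨rfl, rfl⟩
    · exact exists_isPathVia_triangle hB hBc hx₁ hx₂ hx₃ h₁₂ h₁₃ h₂₃
    · exact exists_isPathVia_triangle hB hBc hx₁ hx₃ hx₂ h₁₃ h₁₂ h₂₃.symm
  exact exists_even_cycle_avoiding_mem_of_triangle (by rw [← hW]; exact hc.rotate hx₁.1)
    (by rw [← hW, length_rotate]; exact hce) (fun v => by rw [← hW, mem_support_rotate_iff]; rfl)
    hBc hP₁ hP₂ hP₃ hPe hM hMc

end

theorem stmt_3_general {V : Type*} (G : SimpleGraph V) (h3 : KConnected 3 G)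
    (D : Set V) (hDconn : (G.induce D).Connected) (d : V) (hd : d ∈ D)
    (u : V) (c : G.Walk u u) (hc : c.IsCycle) (hce : Even c.length)
    (hcD : ∀ v ∈ c.support, v ∉ D)
    (hmax : ∀ (u' : V) (c' : G.Walk u' u'), c'.IsCycle → Even c'.length →
      (∀ v ∈ c'.support, v ∉ D) →
      (avoidComp G d {v : V | v ∈ c'.support}).ncard ≤
        (avoidComp G d {v : V | v ∈ c.support}).ncard) :
    (G.induce {v : V | v ∉ c.support}).Connected := by
  classical
  -- `Nat.card` of an infinite type is `0`, so `KConnected 3 G` forces `V` to be finite.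
  have : Finite V := Nat.finite_of_card_ne_zero (by have := h3.1; omega)
  set C : Set V := {v | v ∈ c.support}
  set A := avoidComp G d C
  have hDC : Disjoint D C := Set.disjoint_left.2 fun v hvD hvC => hcD v hvC hvD
  have hdC : d ∉ C := Set.disjoint_left.1 hDC hd
  by_contra hdisc
  obtain ⟨b, hbC, hbA⟩ : ∃ b ∉ C, b ∉ A := by
    by_contra! h
    exact hdisc (induce_compl_connected_of_forall_mem_avoidComp hdC h)
  obtain ⟨w, c', hc', hc'e, ⟨m, hmA, hmc'⟩, hc'CB⟩ :=
    exists_even_cycle_avoiding_mem_of_attachments hc hce induce_avoidComp_preconnected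
      (Set.disjoint_left.2 fun _ hv => notMem_of_mem_avoidComp hv)
      (le_ncard_attachments h3 hbC hdC fun h => hbA (mem_avoidComp_comm h))
      (le_ncard_attachments h3 hdC hbC hbA) fun _ hm => hm.1
  have hc'A : Disjoint {v | v ∈ c'.support} A := Set.disjoint_left.2 fun v hv hvA =>
    (hc'CB v hv).elim (notMem_of_mem_avoidComp (S := C) hvA)
      (Set.disjoint_left.1 (disjoint_avoidComp hbA) hvA)
  have hDA : D ⊆ A := subset_avoidComp_of_preconnected hDconn.preconnected hd hDC
  exact (hmax w c' hc' hc'e fun v hv hvD => Set.disjoint_left.1 hc'A hv (hDA hvD)).not_gt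
    (Set.ncard_lt_ncard (avoidComp_ssubset hc'A hmA hmc'))

/-- If `G` is 3-connected, `D` a connected subgraph with an even cycle in `G - V(D)`,
and `C` is an even cycle of `G - V(D)` maximizing the order of the component of
`G - V(C)` containing `D`, then `G - V(C)` is connected. -/
theorem stmt_3 {V : Type*} [Fintype V] (G : SimpleGraph V) (h3 : KConnected 3 G)
    (D : Set V) (hDconn : (G.induce D).Connected) (d : V) (hd : d ∈ D)
    (u : V) (c : G.Walk u u) (hc : c.IsCycle) (hce : Even c.length)
    (hcD : ∀ v ∈ c.support, v ∉ D)
    (hmax : ∀ (u' : V) (c' : G.Walk u' u'), c'.IsCycle → Even c'.length →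
      (∀ v ∈ c'.support, v ∉ D) →
      (avoidComp G d {v : V | v ∈ c'.support}).ncard ≤
        (avoidComp G d {v : V | v ∈ c.support}).ncard) :
    (G.induce {v : V | v ∉ c.support}).Connected :=
  stmt_3_general G h3 D hDconn d hd u c hc hce hcD hmax
end

section
/- Let G be a graph containing a vertex-disjoint even cycle B and odd cycle D. Suppose there exist two vertex-disjoint paths P1, P2 from B to D (internally disjoint from B and D) whose endpoints u1, u2 on B are quasi-diagonal, i.e., one of the two arcs of B between u1 and u2 has length ℓ(B)/2 − 1. Then G contains two cycles of consecutive even lengths. -/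
/-!
Let `A₁, A₂` be the two arcs of `B` between `u₁` and `u₂`; quasi-diagonality says their lengths
differ by exactly `2`, and they have the same parity because `ℓ(B)` is even. Since `D` is odd, its
two arcs between the ends of `P₁, P₂` have different parities, so `P₁`, a suitable arc of `D` and
`P₂` form a `u₁`–`u₂` path `Q` meeting `B` only in its ends with `ℓ(A₁) + ℓ(Q)` even. Then
`A₁ ∪ Q` and `A₂ ∪ Q` are cycles of consecutive even lengths.
-/

open SimpleGraph

/-- Vertices `a` and `b` of the even cycle `c` are quasi-diagonal:
one of the two arcs of `c` between them has length `ℓ(c)/2 - 1`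
(equivalently, the other has length `ℓ(c)/2 + 1`). -/
def QuasiDiagonal {V : Type*} [DecidableEq V] {G : SimpleGraph V} {x : V}
    (c : G.Walk x x) (a b : V) : Prop :=
  ∃ (ha : a ∈ c.support) (hb : b ∈ (c.rotate a ha).support),
    ((c.rotate a ha).takeUntil b hb).length = c.length / 2 - 1 ∨
    ((c.rotate a ha).takeUntil b hb).length = c.length / 2 + 1

namespace SimpleGraph.Walk

variable {V : Type*} {G : SimpleGraph V} {u v w x : V}

lemma IsPath.start_notMem_support_tail_s5 {p : G.Walk u v} (hp : p.IsPath) :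
    u ∉ p.support.tail := by
  have hnd := hp.support_nodup
  rw [← cons_tail_support, List.nodup_cons] at hnd
  exact hnd.1

lemma IsPath.append_of_inter_s5 {p : G.Walk u v} {q : G.Walk v w} (hp : p.IsPath) (hq : q.IsPath)
    (h : ∀ t ∈ p.support, t ∈ q.support → t = v) : (p.append q).IsPath := by
  refine IsPath.mk' ?_
  rw [support_append, List.nodup_append']
  refine ⟨hp.support_nodup, hq.support_nodup.sublist (List.tail_sublist _), ?_⟩
  intro t htp htq
  obtain rfl := h t htp (List.mem_of_mem_tail htq)
  exact hq.start_notMem_support_tail_s5 htq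

lemma IsPath.isCycle_append_of_inter_s5 {p : G.Walk u v} {q : G.Walk v u} (hp : p.IsPath)
    (hq : q.IsPath) (h : ∀ t ∈ p.support, t ∈ q.support → t = u ∨ t = v)
    (hn : 1 < p.length ∨ 1 < q.length) : (p.append q).IsCycle := by
  refine hp.isCycle_append hq (fun t htp htq => ?_) hn
  rcases h t (List.mem_of_mem_tail htp) (List.mem_of_mem_tail htq) with rfl | rfl
  · exact hp.start_notMem_support_tail_s5 htp
  · exact hq.start_notMem_support_tail_s5 htq

variable [DecidableEq V]

lemma IsCycle.isPath_dropUntil {c : G.Walk u u} (hc : c.IsCycle) (h : v ∈ c.support)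
    (huv : u ≠ v) : (c.dropUntil v h).IsPath :=
  IsCycle.isPath_of_append_right (not_nil_of_ne huv) (by rwa [take_spec])

lemma length_takeUntil_add_length_dropUntil (p : G.Walk u v) (h : w ∈ p.support) :
    (p.takeUntil w h).length + (p.dropUntil w h).length = p.length := by
  rw [← length_append, take_spec]

lemma IsCycle.isCycle_theta {c : G.Walk u u} (hc : c.IsCycle) (hv : v ∈ c.support) (huv : u ≠ v)
    {q : G.Walk u v} (hq : q.IsPath) (hq₁ : 1 < q.length)
    (hqc : ∀ t ∈ q.support, t ∈ c.support → t = u ∨ t = v) :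
    ((c.takeUntil v hv).append q.reverse).IsCycle ∧ (q.append (c.dropUntil v hv)).IsCycle := by
  constructor
  · refine (hc.isPath_takeUntil hv).isCycle_append_of_inter_s5 hq.reverse (fun t ht htq => ?_)
      (by simp [hq₁])
    exact hqc t (by simpa using htq) (c.support_takeUntil_subset_support hv ht)
  · exact hq.isCycle_append_of_inter_s5 (hc.isPath_dropUntil hv huv)
      (fun t htq ht => hqc t htq (c.support_dropUntil_subset_support hv ht)) (Or.inl hq₁)

lemma IsCycle.exists_isPath_even_add_length {d : G.Walk x x} (hd : d.IsCycle)
    (hodd : Odd d.length) (hv : v ∈ d.support) (hw : w ∈ d.support) (hvw : v ≠ w) (n : ℕ) :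
    ∃ a : G.Walk v w, a.IsPath ∧ (∀ t ∈ a.support, t ∈ d.support) ∧ Even (n + a.length) := by
  set c := d.rotate v hv
  have hc : c.IsCycle := hd.rotate hv
  have hw' : w ∈ c.support := (mem_support_rotate_iff d v hv).2 hw
  have hsub {t : V} (ht : t ∈ c.support) : t ∈ d.support := (mem_support_rotate_iff d v hv).1 ht
  have hlen := length_takeUntil_add_length_dropUntil c hw'
  rw [length_rotate] at hlen
  by_cases hpar : Even (n + (c.takeUntil w hw').length)
  · exact ⟨_, hc.isPath_takeUntil hw',
      fun t ht => hsub (c.support_takeUntil_subset_support hw' ht), hpar⟩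
  · refine ⟨_, (hc.isPath_dropUntil hw' hvw).reverse, fun t ht => ?_, ?_⟩
    · exact hsub (c.support_dropUntil_subset_support hw' (by simpa using ht))
    · rw [length_reverse]
      rw [Nat.not_even_iff_odd] at hpar
      rw [← hlen] at hodd
      grind

lemma eq_endpoint_of_mem_support {S T : Set V} (hST : ∀ t ∈ S, t ∉ T) {p : G.Walk u v}
    (hu : u ∈ S) (hv : v ∈ T) (hi : ∀ t ∈ p.support, t ≠ u → t ≠ v → t ∉ S ∧ t ∉ T) :
    (∀ t ∈ p.support, t ∈ S → t = u) ∧ ∀ t ∈ p.support, t ∈ T → t = v := by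
  constructor
  · intro t ht htS
    by_contra htu
    obtain rfl | htv := eq_or_ne t v
    · exact hST t htS hv
    · exact (hi t ht htu htv).1 htS
  · intro t ht htT
    by_contra htv
    obtain rfl | htu := eq_or_ne t u
    · exact hST t hu htT
    · exact (hi t ht htu htv).2 htT

/-- The path is `p₁`, then one of the two arcs of `d` (which have different parities), then `p₂`
backwards. -/
lemma IsCycle.exists_isPath_even_add_length_through {S : Set V} {d : G.Walk x x} (hd : d.IsCycle)
    (hodd : Odd d.length) (hSd : ∀ t ∈ S, t ∉ d.support) {u₁ u₂ w₁ w₂ : V}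
    {p₁ : G.Walk u₁ w₁} {p₂ : G.Walk u₂ w₂} (hp₁ : p₁.IsPath) (hp₂ : p₂.IsPath)
    (hu₁ : u₁ ∈ S) (hu₂ : u₂ ∈ S) (hw₁ : w₁ ∈ d.support) (hw₂ : w₂ ∈ d.support)
    (hi₁ : ∀ t ∈ p₁.support, t ≠ u₁ → t ≠ w₁ → t ∉ S ∧ t ∉ d.support)
    (hi₂ : ∀ t ∈ p₂.support, t ≠ u₂ → t ≠ w₂ → t ∉ S ∧ t ∉ d.support)
    (hpd : ∀ t ∈ p₁.support, t ∉ p₂.support) (n : ℕ) :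
    ∃ q : G.Walk u₁ u₂, q.IsPath ∧ 1 < q.length ∧
      (∀ t ∈ q.support, t ∈ S → t = u₁ ∨ t = u₂) ∧ Even (n + q.length) := by
  have hw₁₂ : w₁ ≠ w₂ := fun h => hpd w₁ p₁.end_mem_support (h ▸ p₂.end_mem_support)
  obtain ⟨a, ha, had, hpar⟩ :=
    hd.exists_isPath_even_add_length hodd hw₁ hw₂ hw₁₂ (n + p₁.length + p₂.length)
  obtain ⟨h₁S, h₁d⟩ := eq_endpoint_of_mem_support (T := {t | t ∈ d.support}) hSd hu₁ hw₁ hi₁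
  obtain ⟨h₂S, h₂d⟩ := eq_endpoint_of_mem_support (T := {t | t ∈ d.support}) hSd hu₂ hw₂ hi₂
  have hp₁pos : 0 < p₁.length :=
    not_nil_iff_lt_length.1 (not_nil_of_ne fun h => hSd _ hu₁ (h ▸ hw₁))
  have hp₂pos : 0 < p₂.length :=
    not_nil_iff_lt_length.1 (not_nil_of_ne fun h => hSd _ hu₂ (h ▸ hw₂))
  refine ⟨p₁.append (a.append p₂.reverse),
    hp₁.append_of_inter_s5 (ha.append_of_inter_s5 hp₂.reverse ?_) ?_, ?_, ?_, ?_⟩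
  · exact fun t hta htp => h₂d t (by simpa using htp) (had t hta)
  · intro t htp htq
    rcases (mem_support_append_iff ..).1 htq with hta | htp₂
    · exact h₁d t htp (had t hta)
    · exact absurd (by simpa using htp₂) (hpd t htp)
  · simp only [length_append, length_reverse]
    omega
  · intro t ht htS
    simp only [mem_support_append_iff, support_reverse, List.mem_reverse] at ht
    rcases ht with ht | ht | ht
    · exact .inl (h₁S t ht htS)
    · exact absurd (had t ht) (hSd t htS)
    · exact .inr (h₂S t ht htS)
  · simp only [length_append, length_reverse]
    convert hpar using 1
    ring

end SimpleGraph.Walk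

lemma hasTwoConsecEvenCycles_of_isCycle {V : Type*} {G : SimpleGraph V} {u v : V}
    {c₁ : G.Walk u u} {c₂ : G.Walk v v} (hc₁ : c₁.IsCycle) (hc₂ : c₂.IsCycle)
    (heven : Even c₁.length) (hlen : c₂.length = c₁.length + 2) : HasTwoConsecEvenCycles G := by
  obtain ⟨m, hm⟩ := heven
  have := hc₁.three_le_length
  exact ⟨u, v, c₁, c₂, m, hc₁, hc₂, by omega, by omega, by omega⟩

theorem stmt_5_general {V : Type*} [DecidableEq V] (G : SimpleGraph V) {x z u₁ u₂ w₁ w₂ : V}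
    (b : G.Walk x x) (d : G.Walk z z) (hb : b.IsCycle) (hd : d.IsCycle)
    (hbe : Even b.length) (hdo : Odd d.length)
    (hdisj : ∀ v ∈ b.support, v ∉ d.support)
    (p₁ : G.Walk u₁ w₁) (p₂ : G.Walk u₂ w₂) (hp₁ : p₁.IsPath) (hp₂ : p₂.IsPath)
    (hw₁ : w₁ ∈ d.support) (hw₂ : w₂ ∈ d.support)
    (hi₁ : ∀ v ∈ p₁.support, v ≠ u₁ → v ≠ w₁ → v ∉ b.support ∧ v ∉ d.support)
    (hi₂ : ∀ v ∈ p₂.support, v ≠ u₂ → v ≠ w₂ → v ∉ b.support ∧ v ∉ d.support)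
    (hpd : ∀ v ∈ p₁.support, v ∉ p₂.support)
    (hqd : QuasiDiagonal b u₁ u₂) :
    HasTwoConsecEvenCycles G := by
  obtain ⟨hu₁, hu₂c, hql⟩ := hqd
  have hu₂ : u₂ ∈ b.support := (Walk.mem_support_rotate_iff ..).1 hu₂c
  have hu₁₂ : u₁ ≠ u₂ := fun h => hpd u₁ p₁.start_mem_support (h ▸ p₂.start_mem_support)
  obtain ⟨q, hq, hq₁, hqb, hpar⟩ :=
    hd.exists_isPath_even_add_length_through (S := {t | t ∈ b.support}) hdo hdisj hp₁ hp₂ hu₁ hu₂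
      hw₁ hw₂ hi₁ hi₂ hpd ((b.rotate u₁ hu₁).takeUntil u₂ hu₂c).length
  obtain ⟨hK₁, hK₂⟩ := (hb.rotate hu₁).isCycle_theta hu₂c hu₁₂ hq hq₁
    fun t ht htc => hqb t ht ((Walk.mem_support_rotate_iff ..).1 htc)
  have harcs := (b.rotate u₁ hu₁).length_takeUntil_add_length_dropUntil hu₂c
  rw [Walk.length_rotate] at harcs
  have := hb.three_le_length
  rw [Nat.even_iff] at hbe hpar
  rcases hql with h | h
  · refine hasTwoConsecEvenCycles_of_isCycle hK₁ hK₂ ?_ ?_ <;>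
      simp only [Walk.length_append, Walk.length_reverse, Nat.even_iff] <;> omega
  · refine hasTwoConsecEvenCycles_of_isCycle hK₂ hK₁ ?_ ?_ <;>
      simp only [Walk.length_append, Walk.length_reverse, Nat.even_iff] <;> omega

/-- If `G` has disjoint cycles `B` (even) and `D` (odd), joined by two disjoint paths
`P₁, P₂` (internally disjoint from both cycles) whose endpoints on `B` are
quasi-diagonal, then `G` has two cycles of consecutive even lengths. -/
theorem stmt_5 {V : Type*} [DecidableEq V] (G : SimpleGraph V) {x z u₁ u₂ w₁ w₂ : V}
    (b : G.Walk x x) (d : G.Walk z z) (hb : b.IsCycle) (hd : d.IsCycle)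
    (hbe : Even b.length) (hdo : Odd d.length)
    (hdisj : ∀ v ∈ b.support, v ∉ d.support)
    (p₁ : G.Walk u₁ w₁) (p₂ : G.Walk u₂ w₂) (hp₁ : p₁.IsPath) (hp₂ : p₂.IsPath)
    (hu₁ : u₁ ∈ b.support) (hu₂ : u₂ ∈ b.support)
    (hw₁ : w₁ ∈ d.support) (hw₂ : w₂ ∈ d.support)
    (hi₁ : ∀ v ∈ p₁.support, v ≠ u₁ → v ≠ w₁ → v ∉ b.support ∧ v ∉ d.support)
    (hi₂ : ∀ v ∈ p₂.support, v ≠ u₂ → v ≠ w₂ → v ∉ b.support ∧ v ∉ d.support)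
    (hpd : ∀ v ∈ p₁.support, v ∉ p₂.support)
    (hqd : QuasiDiagonal b u₁ u₂) :
    HasTwoConsecEvenCycles G :=
  stmt_5_general G b d hb hd hbe hdo hdisj p₁ p₂ hp₁ hp₂ hw₁ hw₂ hi₁ hi₂ hpd hqd
end

section
/- For every n with n ≡ 1 (mod 4), there exists an n-vertex graph with exactly (5/2)(n−1) edges, minimum degree 4, that contains no two cycles of consecutive even lengths: namely any connected graph each of whose blocks is a clique K_5. -/
open SimpleGraph

/-- The induced subgraph on `B` is connected and has no cut-vertex. -/
def NoCutVertex {V : Type*} (G : SimpleGraph V) (B : Set V) : Prop :=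
  (G.induce B).Connected ∧
    ∀ v ∈ B, (B \ {v}).Nonempty → (G.induce (B \ {v})).Connected

/-- `B` is a block of `G`: a maximal connected subgraph without a cut-vertex. -/
def IsBlock {V : Type*} (G : SimpleGraph V) (B : Set V) : Prop :=
  NoCutVertex G B ∧ ∀ B' : Set V, B ⊆ B' → NoCutVertex G B' → B' = B

/-!
Take the windmill of `K₅`'s: a hub `0` joined to everything, and the remaining `4k` vertices
split into blades of four, each blade a clique. Removing the hub disconnects the blades from each
other, so every 2-connected piece of the graph (a block, or the vertex set of a cycle) lies in one
blade together with the hub. Hence the blocks are the `K₅`'s and no cycle is longer than `5`; an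
even cycle then has length `4`, so there are no two of consecutive even lengths. The hub has
degree `4k`, every other vertex degree `4`, and the handshake lemma counts `10k` edges.
-/

namespace SimpleGraph

variable {V : Type*} {G : SimpleGraph V}

lemma ncard_neighborSet_eq_degree [Fintype V] [DecidableRel G.Adj] (v : V) :
    (G.neighborSet v).ncard = G.degree v := by
  rw [← card_neighborSet_eq_degree, ← Nat.card_eq_fintype_card, Nat.card_coe_set_eq]

lemma two_mul_ncard_edgeSet [Fintype V] (G : SimpleGraph V) :
    2 * G.edgeSet.ncard = ∑ v, (G.neighborSet v).ncard := by
  classical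
  rw [← coe_edgeFinset, Set.ncard_coe_finset, ← sum_degrees_eq_twice_card_edges]
  simp only [ncard_neighborSet_eq_degree]

lemma IsClique.induce_connected {s : Set V} (h : G.IsClique s) (hs : s.Nonempty) :
    (G.induce s).Connected := by
  have := hs.to_subtype
  rw [induce_eq_top.mpr h]
  exact connected_top

lemma IsClique.noCutVertex {s : Set V} (h : G.IsClique s) (hs : s.Nonempty) :
    NoCutVertex G s :=
  ⟨h.induce_connected hs, fun _ _ hne => (h.subset Set.sdiff_subset).induce_connected hne⟩

lemma Walk.IsCycle.length_le_ncard {u : V} {c : G.Walk u u} (hc : c.IsCycle) {s : Set V}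
    (hs : s.Finite) (hsub : ∀ x ∈ c.support, x ∈ s) : c.length ≤ s.ncard := by
  classical
  calc c.length = c.support.tail.toFinset.card := by
        rw [List.toFinset_card_of_nodup hc.support_nodup, List.length_tail, Walk.length_support,
          Nat.add_sub_cancel]
    _ = (c.support.tail.toFinset : Set V).ncard := (Set.ncard_coe_finset _).symm
    _ ≤ s.ncard := Set.ncard_le_ncard
        (fun x hx => hsub x (List.mem_of_mem_tail (List.mem_toFinset.mp hx))) hs

section Hub

variable {ι : Type*} {z : V} {f : V → ι}
  (hf : ∀ u v, G.Adj u v → u ≠ z → v ≠ z → f u = f v)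
include hf

lemma label_eq_of_reachable_induce {S : Set V} (hz : z ∉ S) {u v : S}
    (h : (G.induce S).Reachable u v) : f u = f v := by
  rw [reachable_iff_reflTransGen] at h
  induction h with
  | refl => rfl
  | tail _ hadj ih =>
    exact ih.trans (hf _ _ hadj (ne_of_mem_of_not_mem (Subtype.prop _) hz)
      (ne_of_mem_of_not_mem (Subtype.prop _) hz))

lemma Walk.label_eq_of_notMem_support {u v : V} (p : G.Walk u v) (hz : z ∉ p.support) :
    ∀ x ∈ p.support, f x = f u := by
  induction p with
  | nil => simp
  | cons hadj q ih =>
    rw [support_cons, List.mem_cons, not_or] at hz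
    intro x hx
    rcases List.mem_cons.mp hx with rfl | hx
    · rfl
    · have hw : _ ≠ z := fun h => hz.2 (h ▸ q.start_mem_support)
      exact (ih hz.2 x hx).trans (hf _ _ hadj (Ne.symm hz.1) hw).symm

lemma Walk.IsPath.label_eq_of_mem_support {u : V} {p : G.Walk u z} (hp : p.IsPath) :
    ∀ x ∈ p.support, x = z ∨ f x = f u := by
  induction p with
  | nil => simp
  | @cons u w t hadj q ih =>
    rw [cons_isPath_iff] at hp
    intro x hx
    rcases List.mem_cons.mp hx with rfl | hx
    · exact Or.inr rfl
    by_cases hw : w = t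
    · subst hw
      rw [isPath_iff_nil.mp hp.1 |>.eq_nil, support_nil, List.mem_singleton] at hx
      exact Or.inl hx
    have hu : u ≠ t := fun h => hp.2 (h ▸ q.end_mem_support)
    exact (ih hf hp.1 x hx).imp_right (·.trans (hf _ _ hadj hu hw).symm)

lemma Walk.IsCycle.exists_support_subset_insert {u : V} {c : G.Walk u u} (hc : c.IsCycle) :
    ∃ y, ∀ x ∈ c.support, x ∈ insert z {w | f w = f y} := by
  classical
  by_cases hz : z ∈ c.support
  · cases h : c.rotate z hz with
    | nil => exact (not_isCycle_nil (h ▸ hc.rotate hz)).elim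
    | @cons _ y _ hadj q =>
      have hq : q.IsPath := ((cons_isCycle_iff q hadj).mp (h ▸ hc.rotate hz)).1
      refine ⟨y, fun x hx => ?_⟩
      rw [← c.mem_support_rotate_iff z hz, h, support_cons, List.mem_cons] at hx
      exact hx.elim Or.inl (hq.label_eq_of_mem_support hf x)
  · exact ⟨u, fun x hx => Or.inr (c.label_eq_of_notMem_support hf hz x hx)⟩

lemma NoCutVertex.exists_subset_insert {B : Set V} (hB : NoCutVertex G B) :
    ∃ y, B ⊆ insert z {x | f x = f y} := by
  by_cases h : ∃ u ∈ B, u ≠ z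
  · obtain ⟨u, hu, huz⟩ := h
    have hconn : (G.induce (B \ {z})).Connected := by
      by_cases hz : z ∈ B
      · exact hB.2 z hz ⟨u, hu, huz⟩
      · rw [Set.sdiff_singleton_eq_self hz]
        exact hB.1
    refine ⟨u, fun v hv => or_iff_not_imp_left.mpr fun hvz => ?_⟩
    exact label_eq_of_reachable_induce hf (S := B \ {z}) (by simp)
      (hconn.preconnected ⟨v, hv, hvz⟩ ⟨u, hu, huz⟩)
  · push Not at h
    exact ⟨z, fun v hv => Or.inl (h v hv)⟩

end Hub

end SimpleGraph

/-- The vertices `4i+1, …, 4i+4` form the `i`-th blade; `bladeIndex 0 = 0` is junk, harmless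
since the hub `0` is adjacent to every vertex. -/
def bladeIndex {n : ℕ} (v : Fin n) : ℕ := (v.val - 1) / 4

def windmill (k : ℕ) : SimpleGraph (Fin (4 * k + 1)) where
  Adj u v := u ≠ v ∧ (u = 0 ∨ v = 0 ∨ bladeIndex u = bladeIndex v)
  symm := ⟨fun _ _ ⟨hne, h⟩ => ⟨hne.symm, by tauto⟩⟩
  loopless := ⟨fun _ ⟨hne, _⟩ => hne rfl⟩

namespace windmill

variable {k : ℕ}

lemma adj_iff {u v : Fin (4 * k + 1)} :
    (windmill k).Adj u v ↔ u ≠ v ∧ (u = 0 ∨ v = 0 ∨ bladeIndex u = bladeIndex v) :=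
  Iff.rfl

def block (x : Fin (4 * k + 1)) : Set (Fin (4 * k + 1)) :=
  insert 0 {y | bladeIndex y = bladeIndex x}

lemma mem_block_self (x : Fin (4 * k + 1)) : x ∈ block x :=
  Set.mem_insert_of_mem _ rfl

lemma bladeIndex_eq_of_adj {u v : Fin (4 * k + 1)} (h : (windmill k).Adj u v) (hu : u ≠ 0)
    (hv : v ≠ 0) : bladeIndex u = bladeIndex v := by
  rcases h with ⟨-, h | h | h⟩
  exacts [absurd h hu, absurd h hv, h]

lemma isClique_block (x : Fin (4 * k + 1)) : (windmill k).IsClique (block x) := by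
  rintro u (rfl | hu) v (rfl | hv) huv
  exacts [absurd rfl huv, ⟨huv, Or.inl rfl⟩, ⟨huv, Or.inr (Or.inl rfl)⟩,
    ⟨huv, Or.inr (Or.inr (hu.trans hv.symm))⟩]

lemma ncard_block (hk : 0 < k) (x : Fin (4 * k + 1)) : (block x).ncard = 5 := by
  set b := bladeIndex x
  have hb : 4 * b + 4 < 4 * k + 1 := by
    have := x.isLt
    simp only [b, bladeIndex]
    omega
  have hblock : block x = Fin.val ⁻¹' ↑(insert 0 (Finset.Icc (4 * b + 1) (4 * b + 4))) := by
    ext y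
    simp only [block, bladeIndex, b, Set.mem_insert_iff, Set.mem_ofPred_eq, Set.mem_preimage,
      Finset.coe_insert, Finset.coe_Icc, Set.mem_Icc, Fin.ext_iff, Fin.val_zero]
    omega
  rw [hblock, Set.ncard_preimage_of_injective_subset_range Fin.val_injective, Set.ncard_coe_finset,
    Finset.card_insert_of_notMem (by simp), Nat.card_Icc]
  · omega
  intro m hm
  simp only [Finset.coe_insert, Finset.coe_Icc, Set.mem_insert_iff, Set.mem_Icc] at hm
  exact ⟨⟨m, by omega⟩, rfl⟩

lemma neighborSet_zero : (windmill k).neighborSet 0 = {0}ᶜ := by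
  ext w
  simp [neighborSet, adj_iff, eq_comm]

lemma neighborSet_of_ne_zero {v : Fin (4 * k + 1)} (hv : v ≠ 0) :
    (windmill k).neighborSet v = block v \ {v} := by
  ext w
  simp only [mem_neighborSet, adj_iff, block, Set.mem_sdiff, Set.mem_insert_iff,
    Set.mem_ofPred_eq, Set.mem_singleton_iff]
  grind

lemma ncard_neighborSet_zero : ((windmill k).neighborSet 0).ncard = 4 * k := by
  rw [neighborSet_zero, Set.ncard_compl, Set.ncard_singleton, Nat.card_eq_fintype_card,
    Fintype.card_fin, Nat.add_sub_cancel]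

lemma ncard_neighborSet_of_ne_zero (hk : 0 < k) {v : Fin (4 * k + 1)} (hv : v ≠ 0) :
    ((windmill k).neighborSet v).ncard = 4 := by
  rw [neighborSet_of_ne_zero hv, Set.ncard_sdiff_singleton_of_mem (mem_block_self v),
    ncard_block hk]

lemma two_mul_ncard_edgeSet (hk : 0 < k) : 2 * (windmill k).edgeSet.ncard = 20 * k := by
  rw [SimpleGraph.two_mul_ncard_edgeSet, Fin.sum_univ_succ, ncard_neighborSet_zero]
  simp only [ncard_neighborSet_of_ne_zero hk (Fin.succ_ne_zero _), Finset.sum_const,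
    Finset.card_univ, Fintype.card_fin, smul_eq_mul]
  ring

lemma connected : (windmill k).Connected :=
  have hub : ∀ v, (windmill k).Reachable v 0 := fun v =>
    if hv : v = 0 then hv ▸ Reachable.refl _ else Adj.reachable ⟨hv, Or.inr (Or.inl rfl)⟩
  ⟨fun u v => (hub u).trans (hub v).symm⟩

lemma eq_block_of_isBlock {B : Set (Fin (4 * k + 1))} (hB : IsBlock (windmill k) B) :
    ∃ x, B = block x := by
  obtain ⟨x, hx⟩ := hB.1.exists_subset_insert (fun _ _ => bladeIndex_eq_of_adj)
  exact ⟨x, (hB.2 _ hx ((isClique_block x).noCutVertex ⟨0, Or.inl rfl⟩)).symm⟩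

lemma length_le_five_of_isCycle (hk : 0 < k) {u : Fin (4 * k + 1)} {c : (windmill k).Walk u u}
    (hc : c.IsCycle) : c.length ≤ 5 := by
  obtain ⟨x, hx⟩ := hc.exists_support_subset_insert (fun _ _ => bladeIndex_eq_of_adj)
  exact ncard_block hk x ▸ hc.length_le_ncard (Set.toFinite _) hx

lemma not_hasTwoConsecEvenCycles (hk : 0 < k) : ¬ HasTwoConsecEvenCycles (windmill k) := by
  rintro ⟨u, v, c₁, c₂, m, hc₁, hc₂, -, hlen₁, hlen₂⟩
  have := hc₁.three_le_length
  have := length_le_five_of_isCycle hk hc₂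
  omega

end windmill

/-- For every `n ≡ 1 (mod 4)` (with `n ≥ 5`) there is a connected `n`-vertex graph,
each of whose blocks is a clique `K₅`, with exactly `(5/2)(n-1)` edges, minimum
degree 4, and no two cycles of consecutive even lengths. -/
theorem stmt_11 (n : ℕ) (hn : n % 4 = 1) (h5 : 5 ≤ n) :
    ∃ G : SimpleGraph (Fin n),
      G.Connected ∧
      (∀ B : Set (Fin n), IsBlock G B →
        B.ncard = 5 ∧ ∀ u ∈ B, ∀ v ∈ B, u ≠ v → G.Adj u v) ∧
      2 * G.edgeSet.ncard = 5 * (n - 1) ∧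
      (∀ v : Fin n, 4 ≤ {w : Fin n | G.Adj v w}.ncard) ∧
      (∃ v : Fin n, {w : Fin n | G.Adj v w}.ncard = 4) ∧
      ¬ HasTwoConsecEvenCycles G := by
  obtain ⟨k, rfl⟩ : ∃ k, n = 4 * k + 1 := ⟨n / 4, by omega⟩
  have hk : 0 < k := by omega
  have hdeg : ∀ v : Fin (4 * k + 1), v ≠ 0 → ((windmill k).neighborSet v).ncard = 4 :=
    fun _ => windmill.ncard_neighborSet_of_ne_zero hk
  refine ⟨windmill k, windmill.connected, fun B hB => ?_, ?_, fun v => ?_,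
    ⟨⟨1, by omega⟩, hdeg _ (by simp [Fin.ext_iff])⟩,
    windmill.not_hasTwoConsecEvenCycles hk⟩
  · obtain ⟨x, rfl⟩ := windmill.eq_block_of_isBlock hB
    exact ⟨windmill.ncard_block hk x, fun u hu v hv => windmill.isClique_block x hu hv⟩
  · rw [windmill.two_mul_ncard_edgeSet hk]
    omega
  · change 4 ≤ ((windmill k).neighborSet v).ncard
    by_cases hv : v = 0
    · rw [hv, windmill.ncard_neighborSet_zero]
      omega
    · rw [hdeg v hv]
end
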